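/- Under the Malthusian hypotheses and assuming m := ∫_ℛ #s ν(ds) < ∞, for the cascade started from x = 1: if L and Q are lines in 𝒰 with L ⪯ Q, then E[M_Q | H_L] ≤ M_L almost surely, where M_Q = ∑_{u∈Q} ξ_u^{p_0}. -/

import Mathlib

open MeasureTheory ProbabilityTheory Filter Real
open scoped ENNReal NNReal Topology

/-- Representation space for finite point measures on `(0,∞)`: a point measure `s`
is identified with the sequence `(s 0, s 1, …)` of its atoms followed by zeros. -/
abbrev PMSeq : Type := ℕ → ℝ

/-- `s` is a genuine representation of a finite point measure: all entries are
nonnegative and the nonzero entries (the atoms) are exactly those of index `< n`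
for some `n`. -/
def IsPointSeq (s : PMSeq) : Prop :=
  (∀ i, 0 ≤ s i) ∧ ∃ n : ℕ, ∀ i, s i ≠ 0 ↔ i < n

/-- The number `#s` of atoms of `s`. -/
noncomputable def numAtoms (s : PMSeq) : ℕ := Nat.card {i : ℕ // s i ≠ 0}

/-- `⟨x^p, s⟩ = ∑_{i=1}^{#s} s_i ^ p`, valued in `[0,∞]`. -/
noncomputable def powSum (p : ℝ) (s : PMSeq) : ℝ≥0∞ :=
  ∑' i : ℕ, if s i = 0 then 0 else ENNReal.ofReal (s i ^ p)

/-- `Λ(p) = ∫ ⟨x^p, s⟩ ν(ds) ∈ [0,∞]`. -/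
noncomputable def Lam (ν : Measure PMSeq) (p : ℝ) : ℝ≥0∞ := ∫⁻ s, powSum p s ∂ν

/-- `κ(p) = 1 - Λ(p)` (junk value when `Λ(p) = ∞`). -/
noncomputable def kappa (ν : Measure PMSeq) (p : ℝ) : ℝ := 1 - (Lam ν p).toReal

/-- `p̲ = inf {p : Λ(p) < ∞}`, as an extended real. -/
noncomputable def pLow (ν : Measure PMSeq) : EReal :=
  sInf {x : EReal | ∃ p : ℝ, x = ↑p ∧ Lam ν p < ⊤}

/-- `p_∞ = inf {p > p̲ : Λ(p) = ∞}`, as an extended real (`⊤` if no such `p`). -/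
noncomputable def pInfty (ν : Measure PMSeq) : EReal :=
  sInf {x : EReal | ∃ p : ℝ, x = ↑p ∧ pLow ν < ↑p ∧ Lam ν p = ⊤}

/-- `p ∈ (p̲, p_∞)`. -/
def InDomain (ν : Measure PMSeq) (p : ℝ) : Prop := pLow ν < ↑p ∧ ↑p < pInfty ν

/-- `p₀` is the Malthusian exponent: the smallest solution of `κ(p) = 0`
(equivalently `Λ(p) = 1`) on `(p̲, p_∞)`. -/
def IsMalthusian (ν : Measure PMSeq) (p₀ : ℝ) : Prop :=
  InDomain ν p₀ ∧ Lam ν p₀ = 1 ∧ ∀ q : ℝ, InDomain ν q → Lam ν q = 1 → p₀ ≤ q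

/-- The Malthusian hypotheses: the Malthusian exponent `p₀` exists, is positive,
`κ(p) > 0` for some `p > p₀`, and `∫ ⟨x^{p₀}, s⟩^p ν(ds) < ∞` for some `p > 1`. -/
def MalthusHyp (ν : Measure PMSeq) (p₀ : ℝ) : Prop :=
  IsMalthusian ν p₀ ∧ 0 < p₀ ∧ (∃ p : ℝ, p₀ < p ∧ InDomain ν p ∧ Lam ν p < 1) ∧
    ∃ p : ℝ, 1 < p ∧ ∫⁻ s, powSum p₀ s ^ p ∂ν < ⊤
variable {Ω : Type*}

/-- The multiplicative cascade built from the i.i.d. marks `R`: `ξ_∅ = x` and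
`ξ_{ui} = R_u(i) · ξ_u`; explicitly `ξ_u = x ∏_{k<|u|} R_{u|k}(u_k)`. -/
noncomputable def xi (R : List ℕ → Ω → ℕ → ℝ) (x : ℝ) (u : List ℕ) (ω : Ω) : ℝ :=
  x * ∏ k ∈ Finset.range u.length, R (u.take k) ω (u.getD k 0)

/-- `M_n^{(p)} = ∑_{|u|=n} ξ_u^p` (summing over individuals of positive size). -/
noncomputable def genSum (R : List ℕ → Ω → ℕ → ℝ) (x p : ℝ) (n : ℕ) (ω : Ω) : ℝ :=
  ∑' u : {u : List ℕ // u.length = n}, if xi R x u ω = 0 then 0 else xi R x u ω ^ p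

/-- The filtration `H_n = σ(R_v : |v| < n)`. -/
noncomputable def cascadeFilt [m0 : MeasurableSpace Ω] (R : List ℕ → Ω → ℕ → ℝ)
    (hR : ∀ u, Measurable (R u)) : Filtration ℕ m0 where
  seq n := ⨆ (v : List ℕ) (_ : v.length < n), MeasurableSpace.comap (R v) inferInstance
  mono' m n hmn := by
    refine iSup₂_le fun v hv => ?_
    exact le_iSup₂ (f := fun (v : List ℕ) (_ : v.length < n) =>
      MeasurableSpace.comap (R v) inferInstance) v (hv.trans_le hmn)
  le' n := iSup₂_le fun v _ => measurable_iff_comap_le.mp (hR v)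


/-- `L` is a line: no element of `L` is a strict prefix of another element. -/
def IsLine (L : Set (List ℕ)) : Prop :=
  ∀ u ∈ L, ∀ v ∈ L, u <+: v → u = v

/-- `L ⪯ Q`: every element of `Q` stems from (has a prefix in) `L`. -/
def LineLE (L Q : Set (List ℕ)) : Prop := ∀ q ∈ Q, ∃ l ∈ L, l <+: q

/-- `Q` covers `L`: `L ⪯ Q` and every node stemming from `L` either stems from
`Q` or has progeny in `Q`. -/
def Covers (L Q : Set (List ℕ)) : Prop :=
  LineLE L Q ∧ ∀ u : List ℕ, (∃ l ∈ L, l <+: u) →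
    (∃ q ∈ Q, q <+: u) ∨ (∃ q ∈ Q, u <+: q)

/-- The pre-`L` sigma-field `H_L`, generated by the reproduction marks of the
strict ancestors of the members of `L` (those marks determine `(ξ_u)_{u ⪯ l, l ∈ L}`). -/
noncomputable def lineSigma [MeasurableSpace Ω] (R : List ℕ → Ω → ℕ → ℝ)
    (L : Set (List ℕ)) : MeasurableSpace Ω :=
  ⨆ (v : List ℕ) (_ : ∃ l ∈ L, v <+: l ∧ v ≠ l),
    MeasurableSpace.comap (R v) inferInstance

/-- `M_Q = ∑_{u ∈ Q} ξ_u^{p₀}` for the cascade started from `1`. -/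
noncomputable def lineSum (R : List ℕ → Ω → ℕ → ℝ) (p₀ : ℝ) (Q : Set (List ℕ))
    (ω : Ω) : ℝ :=
  ∑' u : Q, if xi R 1 u ω = 0 then 0 else xi R 1 (u : List ℕ) ω ^ p₀


/-!
Work in `ℝ≥0∞` with `ξ_u ^ p₀` written as a product of `atomWeight p₀` of the marks along the
path to `u`. For `A ∈ H_L` and `l ∈ L` the marks strictly below `l` are independent of `H_L`, so
`∫_A ξ_{l d} ^ p₀ = ∫_A ξ_l ^ p₀ · ∏ₖ e(d_k)` with `e(i) = ∫ atomWeight p₀ (s i) ν(ds)` and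
`∑ e = Λ(p₀) = 1`. Every `q ∈ Q` is `l ++ d` with `l ∈ L`, and for fixed `l` these `d` form a line,
which by a weighted Kraft inequality carries total weight `∑_d ∏ₖ e(d_k) ≤ 1`. Hence
`∫_A M_Q ≤ ∫_A M_L` for every `A ∈ H_L`, i.e. `E[M_Q | H_L] ≤ M_L`.
-/

namespace IsLine

variable {S T Q : Set (List ℕ)}

lemma mono (hS : IsLine S) (hT : T ⊆ S) : IsLine T :=
  fun _ hu _ hv => hS _ (hT hu) _ (hT hv)

lemma preimage_append (hQ : IsLine Q) (l : List ℕ) : IsLine ((l ++ ·) ⁻¹' Q) :=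
  fun _ hu _ hv huv =>
    List.append_cancel_left (hQ _ hu _ hv ((List.prefix_append_right_inj l).mpr huv))

lemma subset_singleton_nil (hS : IsLine S) (hnil : [] ∈ S) : S ⊆ {[]} :=
  fun _ hu => (hS _ hnil _ hu List.nil_prefix).symm

end IsLine

/-- An inequality only because a member of `Q` may stem from several `ℓ i`. -/
lemma tsum_le_tsum_preimage_append {ι : Type*} {Q : Set (List ℕ)} (ℓ : ι → List ℕ)
    (hcov : ∀ q ∈ Q, ∃ i, ℓ i <+: q) (f : List ℕ → ℝ≥0∞) :
    ∑' q : Q, f q ≤ ∑' i, ∑' d : (ℓ i ++ ·) ⁻¹' Q, f (ℓ i ++ d) := by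
  choose anc hanc using hcov
  let split : Q → Σ i, ((ℓ i ++ ·) ⁻¹' Q : Set (List ℕ)) := fun q =>
    ⟨anc q q.2, (q : List ℕ).drop (ℓ (anc q q.2)).length, by
      simp [List.prefix_iff_eq_append.mp (hanc q q.2), q.2]⟩
  have hsplit : ∀ q, ℓ (split q).1 ++ ((split q).2 : List ℕ) = q := fun q =>
    List.prefix_iff_eq_append.mp (hanc q q.2)
  have hinj : Function.Injective split := fun q q' h => Subtype.ext <| by
    rw [← hsplit q, ← hsplit q', h]
  let g : (Σ i, ((ℓ i ++ ·) ⁻¹' Q : Set (List ℕ))) → ℝ≥0∞ := fun x => f (ℓ x.1 ++ x.2)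
  calc ∑' q : Q, f q = ∑' q : Q, g (split q) := by simp_rw [g, hsplit]
    _ ≤ ∑' x, g x := ENNReal.tsum_comp_le_tsum_of_injective hinj g
    _ = _ := ENNReal.tsum_sigma' g

section WeightedLine

variable (e : ℕ → ℝ≥0∞) (he : ∑' i, e i ≤ 1)
include he

lemma IsLine.tsum_prod_le_one_of_length_le {S : Set (List ℕ)} (hS : IsLine S) {N : ℕ}
    (hlen : ∀ u ∈ S, u.length ≤ N) : ∑' u : S, ((u : List ℕ).map e).prod ≤ 1 := by
  have hsingle : ∀ {S : Set (List ℕ)}, S ⊆ {[]} → ∑' u : S, ((u : List ℕ).map e).prod ≤ 1 :=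
    fun h => (ENNReal.tsum_mono_subtype (fun u => (u.map e).prod) h).trans (by simp)
  induction N generalizing S with
  | zero => exact hsingle fun u hu => by simpa using hlen u hu
  | succ N ih =>
    by_cases hnil : [] ∈ S
    · exact hsingle (hS.subset_singleton_nil hnil)
    have hcov : ∀ q ∈ S, ∃ i, [i] <+: q := by
      rintro (_ | ⟨i, q⟩) hq
      · exact absurd hq hnil
      · exact ⟨i, List.prefix_append [i] q⟩
    calc ∑' u : S, ((u : List ℕ).map e).prod
        ≤ ∑' i, ∑' d : ([i] ++ ·) ⁻¹' S, (([i] ++ d).map e).prod :=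
          tsum_le_tsum_preimage_append _ hcov fun u => (u.map e).prod
      _ = ∑' i, e i * ∑' d : ([i] ++ ·) ⁻¹' S, ((d : List ℕ).map e).prod := by
          simp [ENNReal.tsum_mul_left]
      _ ≤ ∑' i, e i * 1 :=
          ENNReal.tsum_le_tsum fun i => mul_le_mul_right
            (ih (hS.preimage_append _) fun d hd => by simpa using hlen _ hd) _
      _ ≤ 1 := by simpa using he

/-- A weighted Kraft inequality. -/
lemma IsLine.tsum_prod_le_one {S : Set (List ℕ)} (hS : IsLine S) :
    ∑' u : S, ((u : List ℕ).map e).prod ≤ 1 := by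
  rw [ENNReal.tsum_eq_iSup_sum]
  refine iSup_le fun F => ?_
  let T := F.map (Function.Embedding.subtype (· ∈ S))
  have hT : (T : Set (List ℕ)) ⊆ S := by
    intro u hu
    obtain ⟨v, -, rfl⟩ := Finset.mem_map.mp hu
    exact v.2
  rw [show ∑ u ∈ F, ((u : List ℕ).map e).prod = ∑ u ∈ T, (u.map e).prod from
      (Finset.sum_map F (Function.Embedding.subtype _) fun u => (u.map e).prod).symm,
    ← Finset.tsum_subtype']
  exact (hS.mono hT).tsum_prod_le_one_of_length_le e he
    fun u hu => Finset.le_sup (f := List.length) hu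

end WeightedLine

/-- `r ↦ r ^ p`, with the convention of `powSum` and `lineSum` that `0` contributes nothing. -/
noncomputable def atomWeight (p r : ℝ) : ℝ≥0∞ := if r = 0 then 0 else ENNReal.ofReal (r ^ p)

lemma measurable_atomWeight (p : ℝ) : Measurable (atomWeight p) :=
  Measurable.ite (measurableSet_singleton 0) measurable_const
    (ENNReal.measurable_ofReal.comp (measurable_id.pow_const p))

lemma atomWeight_mul {p x y : ℝ} (hx : 0 ≤ x) (hy : 0 ≤ y) :
    atomWeight p (x * y) = atomWeight p x * atomWeight p y := by
  rcases hx.eq_or_lt with rfl | hx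
  · simp [atomWeight]
  rcases hy.eq_or_lt with rfl | hy
  · simp [atomWeight]
  simp [atomWeight, hx.ne', hy.ne', Real.mul_rpow hx.le hy.le,
    ENNReal.ofReal_mul (Real.rpow_nonneg hx.le p)]

lemma atomWeight_prod {ι : Type*} {p : ℝ} (s : Finset ι) {f : ι → ℝ} (hf : ∀ i ∈ s, 0 ≤ f i) :
    atomWeight p (∏ i ∈ s, f i) = ∏ i ∈ s, atomWeight p (f i) := by
  classical
  induction s using Finset.induction_on with
  | empty => simp [atomWeight]
  | insert a s ha ih =>
    rw [Finset.prod_insert ha, Finset.prod_insert ha,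
      atomWeight_mul (hf a (by simp)) (Finset.prod_nonneg fun i hi => hf i (by simp [hi])),
      ih fun i hi => hf i (by simp [hi])]

lemma toReal_atomWeight {p x : ℝ} (hx : 0 ≤ x) :
    (atomWeight p x).toReal = if x = 0 then 0 else x ^ p := by
  unfold atomWeight
  split_ifs
  · rfl
  · exact ENNReal.toReal_ofReal (Real.rpow_nonneg hx p)

noncomputable def meanWeight (ν : Measure PMSeq) (p : ℝ) (i : ℕ) : ℝ≥0∞ :=
  ∫⁻ s, atomWeight p (s i) ∂ν

lemma tsum_meanWeight (ν : Measure PMSeq) (p : ℝ) : ∑' i, meanWeight ν p i = Lam ν p :=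
  (lintegral_tsum fun i =>
    ((measurable_atomWeight p).comp (measurable_pi_apply i)).aemeasurable).symm

/-- The weight of the path `u` in the subtree rooted at `b`; for `b = []` and nonnegative marks
it is `ξ_u ^ p`. -/
noncomputable def pathWeight (R : List ℕ → Ω → ℕ → ℝ) (p : ℝ) (b u : List ℕ) (ω : Ω) : ℝ≥0∞ :=
  ∏ k ∈ Finset.range u.length, atomWeight p (R (b ++ u.take k) ω (u.getD k 0))

lemma pathWeight_append (R : List ℕ → Ω → ℕ → ℝ) (p : ℝ) (b l d : List ℕ) (ω : Ω) :
    pathWeight R p b (l ++ d) ω = pathWeight R p b l ω * pathWeight R p (b ++ l) d ω := by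
  unfold pathWeight
  rw [List.length_append, Finset.prod_range_add]
  congr 1
  · refine Finset.prod_congr rfl fun k hk => ?_
    have hk' : k < l.length := Finset.mem_range.mp hk
    rw [List.take_append_of_le_length hk'.le, List.getD_append _ _ _ _ hk']
  · refine Finset.prod_congr rfl fun k _ => ?_
    rw [List.take_append, List.getD_append_right _ _ _ _ (Nat.le_add_right _ _)]
    simp [List.take_of_length_le (Nat.le_add_right l.length k)]

lemma pathWeight_singleton (R : List ℕ → Ω → ℕ → ℝ) (p : ℝ) (b : List ℕ) (i : ℕ) (ω : Ω) :
    pathWeight R p b [i] ω = atomWeight p (R b ω i) := by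
  simp [pathWeight]

lemma pathWeight_nil_eq_atomWeight_xi {R : List ℕ → Ω → ℕ → ℝ} {ω : Ω}
    (hω : ∀ v i, 0 ≤ R v ω i) (p : ℝ) (u : List ℕ) :
    pathWeight R p [] u ω = atomWeight p (xi R 1 u ω) := by
  rw [xi, one_mul, atomWeight_prod _ fun k _ => hω _ _]
  simp [pathWeight]

lemma xi_nonneg {R : List ℕ → Ω → ℕ → ℝ} {x : ℝ} {ω : Ω} (hx : 0 ≤ x)
    (hω : ∀ v i, 0 ≤ R v ω i) (u : List ℕ) : 0 ≤ xi R x u ω :=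
  mul_nonneg hx (Finset.prod_nonneg fun _ _ => hω _ _)

section Marks

variable (R : List ℕ → Ω → ℕ → ℝ)

noncomputable def markSigma (S : Set (List ℕ)) : MeasurableSpace Ω :=
  ⨆ v ∈ S, MeasurableSpace.comap (R v) inferInstance

/-- `lineSigma R L` is `markSigma R (strictAncestors L)` by definition. -/
def strictAncestors (L : Set (List ℕ)) : Set (List ℕ) := {v | ∃ l ∈ L, v <+: l ∧ v ≠ l}

variable {R}

lemma measurable_markSigma_pathWeight {S : Set (List ℕ)} (p : ℝ) {b u : List ℕ}
    (hS : ∀ k < u.length, b ++ u.take k ∈ S) : Measurable[markSigma R S] (pathWeight R p b u) := by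
  refine Finset.measurable_prod _ fun k hk => (measurable_atomWeight p).comp ?_
  have hR : Measurable[markSigma R S] (R (b ++ u.take k)) :=
    (comap_measurable _).mono (le_iSup₂ (f := fun v (_ : v ∈ S) =>
      MeasurableSpace.comap (R v) inferInstance) _ (hS k (Finset.mem_range.mp hk))) le_rfl
  exact (measurable_pi_apply _).comp hR

lemma IsLine.disjoint_strictAncestors {L : Set (List ℕ)} (hL : IsLine L) {l : List ℕ}
    (hl : l ∈ L) : Disjoint (strictAncestors L) {v | l <+: v} := by
  rw [Set.disjoint_left]
  rintro v ⟨l', hl', hvl', hvne⟩ hlv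
  obtain rfl := hL l hl l' hl' (hlv.trans hvl')
  exact hvne (hvl'.eq_of_length (le_antisymm hvl'.length_le hlv.length_le))

lemma measurable_markSigma_pathWeight_of_mem (p : ℝ) {L : Set (List ℕ)} {l : List ℕ}
    (hl : l ∈ L) : Measurable[markSigma R (strictAncestors L)] (pathWeight R p [] l) :=
  measurable_markSigma_pathWeight p fun k hk => ⟨l, hl, List.take_prefix k l, fun h => by
    have := congrArg List.length h
    simp only [List.nil_append, List.length_take] at this
    omega⟩

variable [MeasurableSpace Ω]

lemma markSigma_le (hRmeas : ∀ u, Measurable (R u)) (S : Set (List ℕ)) :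
    markSigma R S ≤ ‹MeasurableSpace Ω› :=
  iSup₂_le fun v _ => (hRmeas v).comap_le

lemma measurable_pathWeight (hRmeas : ∀ u, Measurable (R u)) (p : ℝ) (b u : List ℕ) :
    Measurable (pathWeight R p b u) :=
  (measurable_markSigma_pathWeight p (S := Set.univ) fun _ _ => trivial).mono
    (markSigma_le hRmeas _) le_rfl

lemma lintegral_mul_of_disjoint {P : Measure Ω} (hRmeas : ∀ u, Measurable (R u))
    (hRindep : iIndepFun R P) {S T : Set (List ℕ)} (hST : Disjoint S T) {X Y : Ω → ℝ≥0∞}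
    (hX : Measurable[markSigma R S] X) (hY : Measurable[markSigma R T] Y) :
    ∫⁻ ω, X ω * Y ω ∂P = (∫⁻ ω, X ω ∂P) * ∫⁻ ω, Y ω ∂P :=
  lintegral_mul_eq_lintegral_mul_lintegral_of_independent_measurableSpace
    (markSigma_le hRmeas S) (markSigma_le hRmeas T)
    (indep_iSup_of_disjoint (fun v => (hRmeas v).comap_le)
      ((iIndepFun_iff_iIndep _ _ _).mp hRindep) hST) hX hY

end Marks

/-- `lineSum` computed in `ℝ≥0∞`, where no summability is needed. -/
noncomputable def lineWeight (R : List ℕ → Ω → ℕ → ℝ) (p : ℝ) (S : Set (List ℕ)) (ω : Ω) :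
    ℝ≥0∞ :=
  ∑' u : S, pathWeight R p [] u ω

lemma lineSum_eq_toReal_lineWeight {R : List ℕ → Ω → ℕ → ℝ} {ω : Ω} (hω : ∀ v i, 0 ≤ R v ω i)
    (p : ℝ) (S : Set (List ℕ)) : lineSum R p S ω = (lineWeight R p S ω).toReal := by
  rw [lineWeight, ENNReal.tsum_toReal_eq fun u => ?_]
  · simp_rw [pathWeight_nil_eq_atomWeight_xi hω, toReal_atomWeight (xi_nonneg zero_le_one hω _)]
    rfl
  · rw [pathWeight_nil_eq_atomWeight_xi hω, atomWeight]
    split_ifs <;> simp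

lemma measurable_lineWeight [MeasurableSpace Ω] {R : List ℕ → Ω → ℕ → ℝ}
    (hRmeas : ∀ u, Measurable (R u)) (p : ℝ) (S : Set (List ℕ)) : Measurable (lineWeight R p S) :=
  Measurable.tsum fun u => measurable_pathWeight hRmeas p [] u

lemma measurable_markSigma_lineWeight (R : List ℕ → Ω → ℕ → ℝ) (p : ℝ) (L : Set (List ℕ)) :
    Measurable[markSigma R (strictAncestors L)] (lineWeight R p L) := by
  -- `Measurable.tsum` takes the σ-algebra on `Ω` as an instance argument.
  let := markSigma R (strictAncestors L)
  exact Measurable.tsum fun l => measurable_markSigma_pathWeight_of_mem p l.2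

section Cascade

variable [MeasurableSpace Ω] {P : Measure Ω} {ν : Measure PMSeq} {R : List ℕ → Ω → ℕ → ℝ}
  (hRmeas : ∀ u, Measurable (R u)) (hRindep : iIndepFun R P)
  (hRdist : ∀ u, Measure.map (R u) P = ν)
include hRmeas hRindep hRdist

lemma lintegral_pathWeight [IsProbabilityMeasure P] (p : ℝ) (b u : List ℕ) :
    ∫⁻ ω, pathWeight R p b u ω ∂P = (u.map (meanWeight ν p)).prod := by
  induction u generalizing b with
  | nil => simp [pathWeight]
  | cons i u ih =>
    have hdisj : Disjoint {b} {v | b ++ [i] <+: v} := by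
      simp [List.prefix_iff_eq_append, List.append_assoc]
    have hsplit : ∀ ω, pathWeight R p b (i :: u) ω =
        pathWeight R p b [i] ω * pathWeight R p (b ++ [i]) u ω :=
      pathWeight_append R p b [i] u
    rw [lintegral_congr hsplit, lintegral_mul_of_disjoint hRmeas hRindep hdisj
        (measurable_markSigma_pathWeight p fun k hk => by simp_all)
        (measurable_markSigma_pathWeight p fun k _ => List.prefix_append _ _), ih]
    simp_rw [pathWeight_singleton, List.map_cons, List.prod_cons]
    congr 1
    rw [meanWeight, ← hRdist b, lintegral_map (f := fun s : PMSeq => atomWeight p (s i))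
      ((measurable_atomWeight p).comp (measurable_pi_apply i)) (hRmeas b)]

lemma lintegral_mul_pathWeight [IsProbabilityMeasure P] (p : ℝ) {S : Set (List ℕ)}
    {b : List ℕ} (hS : Disjoint S {v | b <+: v}) {X : Ω → ℝ≥0∞}
    (hX : Measurable[markSigma R S] X) (d : List ℕ) :
    ∫⁻ ω, X ω * pathWeight R p b d ω ∂P = (∫⁻ ω, X ω ∂P) * (d.map (meanWeight ν p)).prod := by
  rw [lintegral_mul_of_disjoint hRmeas hRindep hS hX
      (measurable_markSigma_pathWeight p fun k _ => List.prefix_append _ _),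
    lintegral_pathWeight hRmeas hRindep hRdist]

/-- The marks below `l` are independent of `H_L`. -/
lemma setLIntegral_pathWeight_append [IsProbabilityMeasure P] (p : ℝ) {L : Set (List ℕ)}
    (hL : IsLine L) {l : List ℕ} (hl : l ∈ L) {A : Set Ω} (hA : MeasurableSet[lineSigma R L] A)
    (d : List ℕ) :
    ∫⁻ ω in A, pathWeight R p [] (l ++ d) ω ∂P =
      (∫⁻ ω in A, pathWeight R p [] l ω ∂P) * (d.map (meanWeight ν p)).prod := by
  have hA' : MeasurableSet A := markSigma_le hRmeas _ A hA
  rw [← lintegral_indicator hA', ← lintegral_indicator hA']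
  have hsplit :
      pathWeight R p [] (l ++ d) = fun ω => pathWeight R p [] l ω * pathWeight R p l d ω :=
    funext (pathWeight_append R p [] l d)
  simp_rw [hsplit, Set.indicator_mul_left]
  exact lintegral_mul_pathWeight hRmeas hRindep hRdist p (hL.disjoint_strictAncestors hl)
    ((measurable_markSigma_pathWeight_of_mem p hl).indicator hA) d

variable [IsProbabilityMeasure P] {p : ℝ} (he : ∑' i, meanWeight ν p i ≤ 1)
include he

lemma lintegral_lineWeight_le_one {S : Set (List ℕ)} (hS : IsLine S) :
    ∫⁻ ω, lineWeight R p S ω ∂P ≤ 1 := by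
  unfold lineWeight
  rw [lintegral_tsum fun u : S => (measurable_pathWeight hRmeas p [] u).aemeasurable]
  simp_rw [lintegral_pathWeight hRmeas hRindep hRdist]
  exact hS.tsum_prod_le_one _ he

lemma setLIntegral_lineWeight_le {L Q : Set (List ℕ)} (hL : IsLine L) (hQ : IsLine Q)
    (hLQ : LineLE L Q) {A : Set Ω} (hA : MeasurableSet[lineSigma R L] A) :
    ∫⁻ ω in A, lineWeight R p Q ω ∂P ≤ ∫⁻ ω in A, lineWeight R p L ω ∂P := by
  have hcov : ∀ q ∈ Q, ∃ l : L, (l : List ℕ) <+: q := fun q hq => by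
    obtain ⟨l, hl, hlq⟩ := hLQ q hq
    exact ⟨⟨l, hl⟩, hlq⟩
  unfold lineWeight
  rw [lintegral_tsum fun u : Q => (measurable_pathWeight hRmeas p [] u).aemeasurable.restrict,
    lintegral_tsum fun u : L => (measurable_pathWeight hRmeas p [] u).aemeasurable.restrict]
  calc ∑' q : Q, ∫⁻ ω in A, pathWeight R p [] q ω ∂P
      ≤ ∑' l : L, ∑' d : ((l : List ℕ) ++ ·) ⁻¹' Q, ∫⁻ ω in A, pathWeight R p [] (l ++ d) ω ∂P :=
        tsum_le_tsum_preimage_append _ hcov fun u => ∫⁻ ω in A, pathWeight R p [] u ω ∂P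
    _ = ∑' l : L, (∫⁻ ω in A, pathWeight R p [] l ω ∂P) *
          ∑' d : ((l : List ℕ) ++ ·) ⁻¹' Q, ((d : List ℕ).map (meanWeight ν p)).prod := by
        simp_rw [setLIntegral_pathWeight_append hRmeas hRindep hRdist p hL (Subtype.prop _) hA,
          ENNReal.tsum_mul_left]
    _ ≤ ∑' l : L, ∫⁻ ω in A, pathWeight R p [] l ω ∂P :=
        ENNReal.tsum_le_tsum fun l =>
          mul_le_of_le_one_right' ((hQ.preimage_append l).tsum_prod_le_one _ he)

end Cascade

lemma condExp_ae_le_of_forall_setIntegral_le {α : Type*} {m m0 : MeasurableSpace α}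
    {μ : Measure α} (hm : m ≤ m0) [SigmaFinite (μ.trim hm)] {f g : α → ℝ}
    (hf : Integrable f μ) (hg : Integrable g μ) (hgm : StronglyMeasurable[m] g)
    (hfg : ∀ s, MeasurableSet[m] s → ∫ x in s, f x ∂μ ≤ ∫ x in s, g x ∂μ) :
    μ[f|m] ≤ᵐ[μ] g := by
  refine ae_of_ae_trim hm (ae_le_of_forall_setIntegral_le
    (integrable_condExp.trim hm stronglyMeasurable_condExp) (hg.trim hm hgm) fun s hs _ => ?_)
  rw [← setIntegral_trim hm stronglyMeasurable_condExp hs, ← setIntegral_trim hm hgm hs,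
    setIntegral_condExp hm hf hs]
  exact hfg s hs

lemma condExp_toReal_ae_le_of_forall_setLIntegral_le {α : Type*} {m m0 : MeasurableSpace α}
    {μ : Measure α} (hm : m ≤ m0) [SigmaFinite (μ.trim hm)] {f g : α → ℝ≥0∞}
    (hf : Measurable f) (hg : Measurable[m] g) (hgi : ∫⁻ x, g x ∂μ ≠ ∞)
    (hfg : ∀ s, MeasurableSet[m] s → ∫⁻ x in s, f x ∂μ ≤ ∫⁻ x in s, g x ∂μ) :
    μ[fun x => (f x).toReal|m] ≤ᵐ[μ] fun x => (g x).toReal := by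
  have hg' : Measurable g := hg.mono hm le_rfl
  have hfi : ∫⁻ x, f x ∂μ ≠ ∞ :=
    ne_top_of_le_ne_top hgi (by simpa using hfg Set.univ MeasurableSet.univ)
  refine condExp_ae_le_of_forall_setIntegral_le hm
    (integrable_toReal_of_lintegral_ne_top hf.aemeasurable hfi)
    (integrable_toReal_of_lintegral_ne_top hg'.aemeasurable hgi)
    hg.ennreal_toReal.stronglyMeasurable fun s hs => ?_
  rw [integral_toReal hf.aemeasurable.restrict (ae_restrict_of_ae (ae_lt_top hf hfi)),
    integral_toReal hg'.aemeasurable.restrict (ae_restrict_of_ae (ae_lt_top hg' hgi))]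
  exact ENNReal.toReal_mono (ne_top_of_le_ne_top hgi (setLIntegral_le_lintegral _ _)) (hfg s hs)

lemma ae_nonneg_of_isPointSeq [MeasurableSpace Ω] {P : Measure Ω} {ν : Measure PMSeq}
    (hν : ∀ᵐ s ∂ν, IsPointSeq s) {R : List ℕ → Ω → ℕ → ℝ} (hRmeas : ∀ u, Measurable (R u))
    (hRdist : ∀ u, Measure.map (R u) P = ν) : ∀ᵐ ω ∂P, ∀ v i, 0 ≤ R v ω i := by
  rw [ae_all_iff]
  intro v
  have h : ∀ᵐ s ∂(P.map (R v)), ∀ i, 0 ≤ s i := by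
    rw [hRdist v]
    exact hν.mono fun s hs => hs.1
  exact ae_of_ae_map (hRmeas v).aemeasurable h

theorem stmt13_general {Ω : Type*} [MeasurableSpace Ω] (P : Measure Ω) [IsProbabilityMeasure P]
    (ν : Measure PMSeq) (hν : ∀ᵐ s ∂ν, IsPointSeq s)
    (R : List ℕ → Ω → ℕ → ℝ) (hRmeas : ∀ u, Measurable (R u))
    (hRindep : iIndepFun R P)
    (hRdist : ∀ u, Measure.map (R u) P = ν)
    (p₀ : ℝ) (hmal : MalthusHyp ν p₀)
    (L Q : Set (List ℕ)) (hL : IsLine L) (hQ : IsLine Q) (hLQ : LineLE L Q) :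
    ∀ᵐ ω ∂P, (P[lineSum R p₀ Q | lineSigma R L]) ω ≤ lineSum R p₀ L ω := by
  have he : ∑' i, meanWeight ν p₀ i ≤ 1 := (tsum_meanWeight ν p₀).trans hmal.1.2.1 |>.le
  have hsum : ∀ S, lineSum R p₀ S =ᵐ[P] fun ω => (lineWeight R p₀ S ω).toReal :=
    fun S => (ae_nonneg_of_isPointSeq hν hRmeas hRdist).mono fun ω hω =>
      lineSum_eq_toReal_lineWeight hω p₀ S
  have hle := condExp_toReal_ae_le_of_forall_setLIntegral_le (μ := P) (markSigma_le hRmeas _)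
    (measurable_lineWeight hRmeas p₀ Q) (measurable_markSigma_lineWeight R p₀ L)
    (ne_top_of_le_ne_top ENNReal.one_ne_top
      (lintegral_lineWeight_le_one hRmeas hRindep hRdist he hL))
    fun A hA => setLIntegral_lineWeight_le hRmeas hRindep hRdist he hL hQ hLQ hA
  filter_upwards [condExp_congr_ae (m := lineSigma R L) (hsum Q), hle, hsum L] with ω hQω hω hLω
  rw [hQω, hLω]
  exact hω

/-- Under the Malthusian hypotheses and `m = ∫ #s ν(ds) < ∞`,
if `L ⪯ Q` are lines then `E[M_Q | H_L] ≤ M_L` almost surely. -/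
theorem stmt13 {Ω : Type*} [MeasurableSpace Ω] (P : Measure Ω) [IsProbabilityMeasure P]
    (ν : Measure PMSeq) [IsProbabilityMeasure ν] (hν : ∀ᵐ s ∂ν, IsPointSeq s)
    (R : List ℕ → Ω → ℕ → ℝ) (hRmeas : ∀ u, Measurable (R u))
    (hRindep : iIndepFun R P)
    (hRdist : ∀ u, Measure.map (R u) P = ν)
    (p₀ : ℝ) (hmal : MalthusHyp ν p₀)
    (hm : ∫⁻ s, (numAtoms s : ℝ≥0∞) ∂ν < ⊤)
    (L Q : Set (List ℕ)) (hL : IsLine L) (hQ : IsLine Q) (hLQ : LineLE L Q) :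
    ∀ᵐ ω ∂P, (P[lineSum R p₀ Q | lineSigma R L]) ω ≤ lineSum R p₀ L ω :=
  stmt13_general P ν hν R hRmeas hRindep hRdist p₀ hmal L Q hL hQ hLQ
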